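/- arXiv:2103.13466 — 2 statements merged into one kernel-verified Lean document; each statement's English description precedes it below -/
import Mathlib

section
/- Let (Z_i)_{i=1}^∞ be i.i.d. standard Gaussian random variables and, for each N ∈ ℕ, set u(N) = (Z₁, …, Z_N)/√(∑_{n=1}^N Z_n²) , a uniformly distributed random point of the unit sphere of ℝ^N. Then the empirical distribution of the coordinates of √N u(N), namely (1/N)∑_{n=1}^N δ_{√N u(N)_n}, converges weakly to the standard Gaussian distribution N(0,1) almost surely as N → ∞. -/
open MeasureTheory ProbabilityTheory Filter Topology BoundedContinuousFunction
open scoped ENNReal NNReal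

/-- The empirical distribution `(1/N) ∑ₙ δ_{v n}` of the entries of a vector `v ∈ ℝ^N`. -/
noncomputable def empDist {N : ℕ} (v : Fin N → ℝ) : Measure ℝ :=
  ((N : ℝ≥0∞))⁻¹ • ∑ n : Fin N, Measure.dirac (v n)

/-!
Let `ν_N` be the empirical distribution of `Z₀, …, Z_{N-1}`. The empirical distribution of
`√N u(N)` is the image of `ν_N` under `x ↦ c_N x`, where `c_N = √N / (∑_{n<N} Z_n²)^{1/2} → 1`
by the strong law of large numbers for `Z²`. Applying the strong law countably often, almost
surely the characteristic function of `ν_N` converges to that of `N(0,1)` at every rational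
point, and the first absolute moments of `ν_N` stay bounded, so these characteristic functions
are uniformly Lipschitz. Hence they also converge at the moving points `c_N t`, where they are
the characteristic functions of the rescaled measures, and Lévy's continuity theorem gives weak
convergence.
-/

theorem tendsto_apply_of_lipschitzWith_of_dense {ι α β : Type*} [PseudoMetricSpace α]
    [PseudoMetricSpace β] {l : Filter ι} {F : ι → α → β} {f : α → β} {K : ℝ≥0} {s : Set α}
    (hF : ∀ᶠ i in l, LipschitzWith K (F i)) (hs : Dense s) (hf : Continuous f)
    (hFs : ∀ y ∈ s, Tendsto (F · y) l (𝓝 (f y))) {x : ι → α} {x₀ : α}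
    (hx : Tendsto x l (𝓝 x₀)) :
    Tendsto (fun i ↦ F i (x i)) l (𝓝 (f x₀)) := by
  rw [Metric.tendsto_nhds]
  intro ε hε
  have hε4 : 0 < ε / 4 := by positivity
  have hKdist : Tendsto (fun y ↦ K * dist y x₀) (𝓝 x₀) (𝓝 0) := by
    simpa using ((continuous_id.dist (continuous_const (y := x₀))).tendsto x₀).const_mul (K : ℝ)
  obtain ⟨y, ⟨hyK, hyf⟩, hys⟩ :
      ∃ y, (K * dist y x₀ < ε / 4 ∧ dist (f y) (f x₀) < ε / 4) ∧ y ∈ s :=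
    ((hKdist.eventually_lt_const hε4).and (Metric.tendsto_nhds.1 (hf.tendsto x₀) _ hε4)
      |>.and_frequently (mem_closure_iff_frequently.1 (hs x₀))).exists
  have hxK : Tendsto (fun i ↦ K * dist (x i) x₀) l (𝓝 0) := hKdist.comp hx
  filter_upwards [hF, Metric.tendsto_nhds.1 (hFs y hys) _ hε4, hxK.eventually_lt_const hε4]
    with i hFi hFy hxi
  calc dist (F i (x i)) (f x₀)
      ≤ dist (F i (x i)) (F i y) + dist (F i y) (f y) + dist (f y) (f x₀) :=
        dist_triangle4 _ _ _ _
    _ ≤ K * (dist (x i) x₀ + dist y x₀) + dist (F i y) (f y) + dist (f y) (f x₀) := by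
        gcongr
        exact (hFi.dist_le_mul _ _).trans (by gcongr; exact dist_triangle_right _ _ _)
    _ < ε := by linarith [mul_add (K : ℝ) (dist (x i) x₀) (dist y x₀)]

section EmpDist

variable {N : ℕ}

theorem integral_empDist {E : Type*} [NormedAddCommGroup E] [NormedSpace ℝ E] [CompleteSpace E]
    (v : Fin N → ℝ) (g : ℝ → E) : ∫ x, g x ∂(empDist v) = (N : ℝ)⁻¹ • ∑ n, g (v n) := by
  rw [empDist, integral_smul_measure,
    integral_finsetSum_measure fun n _ ↦ integrable_dirac enorm_lt_top]
  simp only [integral_dirac, ENNReal.toReal_inv, ENNReal.toReal_natCast]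

theorem integrable_empDist {E : Type*} [NormedAddCommGroup E] (v : Fin N → ℝ) (g : ℝ → E) :
    Integrable g (empDist v) := by
  rcases eq_or_ne N 0 with rfl | hN
  · simp [empDist]
  exact (integrable_finsetSum_measure.2 fun n _ ↦ integrable_dirac enorm_lt_top).smul_measure
    (by simpa using hN)

instance [NeZero N] (v : Fin N → ℝ) : IsProbabilityMeasure (empDist v) :=
  ⟨by simp [empDist, ENNReal.inv_mul_cancel (NeZero.ne _)]⟩

instance (v : Fin N → ℝ) : IsFiniteMeasure (empDist v) := by
  rcases eq_or_ne N 0 with rfl | hN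
  · simp only [empDist, Finset.univ_eq_empty, Finset.sum_empty, smul_zero]
    infer_instance
  · have : NeZero N := ⟨hN⟩
    infer_instance

theorem empDist_comp (v : Fin N → ℝ) {g : ℝ → ℝ} (hg : Measurable g) :
    empDist (g ∘ v) = (empDist v).map g := by
  ext s hs
  simp only [empDist, Function.comp_apply, Measure.smul_apply, Measure.coe_finsetSum,
    Finset.sum_apply, smul_eq_mul, Measure.map_smul, Measure.map_apply hg hs,
    Measure.dirac_apply' _ hs, Measure.dirac_apply' _ (hg hs)]
  rfl

theorem empDist_const_mul (c : ℝ) (v : Fin N → ℝ) :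
    empDist (fun n ↦ c * v n) = (empDist v).map (c * ·) :=
  empDist_comp v (measurable_const_mul c)

end EmpDist

section CharFun

open Complex

theorem integrable_exp_mul_I (μ : Measure ℝ) [IsFiniteMeasure μ] (r : ℝ) :
    Integrable (fun x : ℝ ↦ exp (r * x * I)) μ :=
  .of_bound (by fun_prop) 1 (ae_of_all _ fun x ↦ by rw [← ofReal_mul, norm_exp_ofReal_mul_I])

theorem lipschitzWith_charFun {μ : Measure ℝ} [IsFiniteMeasure μ]
    (hμ : Integrable (fun x ↦ x) μ) {K : ℝ≥0} (hK : ∫ x, |x| ∂μ ≤ K) :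
    LipschitzWith K (charFun μ) := by
  refine LipschitzWith.of_dist_le_mul fun s t ↦ ?_
  have hbound (x : ℝ) : ‖exp (s * x * I) - exp (t * x * I)‖ ≤ |x| * dist s t := by
    have hfactor : exp (s * x * I) - exp (t * x * I)
        = exp (↑(t * x) * I) * (exp (I * ↑((s - t) * x)) - 1) := by
      rw [mul_sub, ← exp_add]; push_cast; ring_nf
    rw [hfactor, norm_mul, norm_exp_ofReal_mul_I, one_mul]
    refine Real.norm_exp_I_mul_ofReal_sub_one_le.trans_eq ?_
    rw [Real.norm_eq_abs, abs_mul, Real.dist_eq, mul_comm]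
  rw [dist_eq_norm, charFun_apply_real, charFun_apply_real,
    ← integral_sub (integrable_exp_mul_I μ s) (integrable_exp_mul_I μ t)]
  calc ‖∫ x, (exp (s * x * I) - exp (t * x * I)) ∂μ‖
      ≤ ∫ x, |x| * dist s t ∂μ :=
        norm_integral_le_of_norm_le (hμ.abs.mul_const _) (ae_of_all _ hbound)
    _ = (∫ x, |x| ∂μ) * dist s t := integral_mul_const _ _
    _ ≤ K * dist s t := by gcongr

end CharFun

theorem tendsto_charFun_map_mul {ι : Type*} {l : Filter ι} {ν : ι → Measure ℝ}
    [∀ i, IsFiniteMeasure (ν i)] {γ : Measure ℝ} [IsFiniteMeasure γ]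
    (hint : ∀ i, Integrable (fun x ↦ x) (ν i))
    (hbdd : IsBoundedUnder (· ≤ ·) l fun i ↦ ∫ x, |x| ∂(ν i))
    (hrat : ∀ q : ℚ, Tendsto (fun i ↦ charFun (ν i) q) l (𝓝 (charFun γ q)))
    {c : ι → ℝ} (hc : Tendsto c l (𝓝 1)) (t : ℝ) :
    Tendsto (fun i ↦ charFun ((ν i).map (c i * ·)) t) l (𝓝 (charFun γ t)) := by
  obtain ⟨K, hK⟩ := hbdd
  rw [eventually_map] at hK
  simp_rw [charFun_map_mul]
  refine tendsto_apply_of_lipschitzWith_of_dense (K := K.toNNReal)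
    (hK.mono fun i hi ↦ lipschitzWith_charFun (hint i) (hi.trans (Real.le_coe_toNNReal K)))
    Rat.denseRange_cast continuous_charFun ?_ (by simpa using hc.mul_const t)
  rintro _ ⟨q, rfl⟩
  exact hrat q

theorem tendsto_integral_of_tendsto_charFun {ν : ℕ → Measure ℝ}
    (hν : ∀ᶠ N in atTop, IsProbabilityMeasure (ν N)) {γ : Measure ℝ} [IsProbabilityMeasure γ]
    (h : ∀ t, Tendsto (fun N ↦ charFun (ν N) t) atTop (𝓝 (charFun γ t))) (f : ℝ →ᵇ ℝ) :
    Tendsto (fun N ↦ ∫ x, f x ∂(ν N)) atTop (𝓝 (∫ x, f x ∂γ)) := by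
  obtain ⟨N₀, hN₀⟩ := eventually_atTop.1 hν
  let P : ℕ → ProbabilityMeasure ℝ := fun N ↦ ⟨ν (N + N₀), hN₀ _ (Nat.le_add_left _ _)⟩
  have hP : Tendsto P atTop (𝓝 ⟨γ, ‹_›⟩) :=
    ProbabilityMeasure.tendsto_iff_tendsto_charFun.2 fun t ↦
      (tendsto_add_atTop_iff_nat N₀).2 (h t)
  exact (tendsto_add_atTop_iff_nat N₀).1
    (ProbabilityMeasure.tendsto_iff_forall_integral_tendsto.1 hP f)

theorem ae_tendsto_integral_empDist {Ω : Type*} [MeasurableSpace Ω] {μ : Measure Ω}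
    {Z : ℕ → Ω → ℝ} (hZ : ∀ i, Measurable (Z i)) (hindep : iIndepFun Z μ) {ν : Measure ℝ}
    (hlaw : ∀ i, μ.map (Z i) = ν) {E : Type*} [NormedAddCommGroup E] [NormedSpace ℝ E]
    [CompleteSpace E] [MeasurableSpace E] [BorelSpace E] [SecondCountableTopology E]
    {g : ℝ → E} (hg : Measurable g) (hgν : Integrable g ν) :
    ∀ᵐ ω ∂μ, Tendsto (fun N : ℕ ↦ ∫ x, g x ∂(empDist fun n : Fin N ↦ Z n ω)) atTop
      (𝓝 (∫ x, g x ∂ν)) := by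
  have hident (i : ℕ) : IdentDistrib (Z i) (Z 0) μ μ :=
    ⟨(hZ i).aemeasurable, (hZ 0).aemeasurable, by rw [hlaw, hlaw]⟩
  rw [← hlaw 0] at hgν ⊢
  have hmean : ∫ ω, g (Z 0 ω) ∂μ = ∫ x, g x ∂(μ.map (Z 0)) :=
    (integral_map (hZ 0).aemeasurable hgν.aestronglyMeasurable).symm
  filter_upwards [strong_law_ae (fun i ↦ g ∘ Z i) (hgν.comp_measurable (hZ 0))
    (fun i j hij ↦ (hindep.indepFun hij).comp hg hg) fun i ↦ (hident i).comp hg] with ω hω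
  simpa [integral_empDist, Fin.sum_univ_eq_sum_range (fun n ↦ g (Z n ω)), hmean] using hω

theorem integral_sq_gaussianReal (v : ℝ≥0) : ∫ x, x ^ 2 ∂(gaussianReal 0 v) = v := by
  rw [← variance_of_integral_eq_zero aemeasurable_id' (integral_id_gaussianReal),
    variance_fun_id_gaussianReal]

theorem tendsto_sqrt_div_sqrt {S : ℕ → ℝ}
    (h : Tendsto (fun N : ℕ ↦ (N : ℝ)⁻¹ * S N) atTop (𝓝 1)) :
    Tendsto (fun N : ℕ ↦ √N / √(S N)) atTop (𝓝 1) := by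
  have h_eq (N : ℕ) : √N / √(S N) = (√((N : ℝ)⁻¹ * S N))⁻¹ := by
    rw [Real.sqrt_mul (by positivity), Real.sqrt_inv, mul_inv, inv_inv, div_eq_mul_inv]
  simpa [h_eq] using h.sqrt.inv₀ (by simp)

theorem stmt3_general {Ω : Type*} [MeasurableSpace Ω] (μ : Measure Ω)
    (Z : ℕ → Ω → ℝ) (hZmeas : ∀ i, Measurable (Z i))
    (hZindep : iIndepFun Z μ)
    (hZgauss : ∀ i, Measure.map (Z i) μ = gaussianReal 0 1)
    (u : (N : ℕ) → Ω → (Fin N → ℝ))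
    (hu : ∀ N ω (n : Fin N),
      u N ω n = Z n ω / Real.sqrt (∑ m : Fin N, (Z m ω) ^ 2)) :
    ∀ᵐ ω ∂μ, ∀ f : ℝ →ᵇ ℝ,
      Tendsto (fun N : ℕ =>
          ∫ t, f t ∂(empDist (fun n : Fin N => Real.sqrt N * u N ω n))) atTop
        (𝓝 (∫ t, f t ∂(gaussianReal 0 1))) := by
  have hsq := ae_tendsto_integral_empDist hZmeas hZindep hZgauss (measurable_id.pow_const 2)
    (memLp_id_gaussianReal 2).integrable_sq
  have habs := ae_tendsto_integral_empDist hZmeas hZindep hZgauss measurable_id.abs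
    ((memLp_id_gaussianReal 1).integrable le_rfl).abs
  have hchar : ∀ᵐ ω ∂μ, ∀ q : ℚ, Tendsto (fun N ↦ charFun (empDist fun n : Fin N ↦ Z n ω) q)
      atTop (𝓝 (charFun (gaussianReal 0 1) q)) :=
    ae_all_iff.2 fun q ↦ by
      simpa only [charFun_apply_real] using ae_tendsto_integral_empDist hZmeas hZindep hZgauss
        (by fun_prop) (integrable_exp_mul_I _ q)
  filter_upwards [hsq, habs, hchar] with ω hsq habs hchar f
  set c : ℕ → ℝ := fun N ↦ √N / √(∑ m : Fin N, Z m ω ^ 2)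
  have hc : Tendsto c atTop (𝓝 1) :=
    tendsto_sqrt_div_sqrt (by simpa [integral_empDist, integral_sq_gaussianReal] using hsq)
  have hscale (N : ℕ) : (fun n : Fin N ↦ √N * u N ω n) = fun n : Fin N ↦ c N * Z n ω := by
    funext n
    simp only [hu, c]
    ring
  simp_rw [hscale, empDist_const_mul]
  refine tendsto_integral_of_tendsto_charFun ?_ (tendsto_charFun_map_mul
    (fun N ↦ integrable_empDist _ _) habs.isBoundedUnder_le hchar hc) f
  filter_upwards [eventually_ge_atTop 1] with N hN
  have : NeZero N := ⟨by omega⟩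
  exact Measure.isProbabilityMeasure_map (measurable_const_mul _).aemeasurable

/-- Let `(Zᵢ)` be i.i.d. standard Gaussians and
`u(N) = (Z₁, …, Z_N)/√(∑ₙ Zₙ²)` (a uniform random point of the unit sphere of `ℝ^N`).
Then the empirical distribution of the coordinates of `√N · u(N)` converges weakly to the
standard Gaussian `N(0,1)` almost surely, i.e. almost surely the integral of every bounded
continuous function converges. -/
theorem stmt3 {Ω : Type*} [MeasurableSpace Ω] (μ : Measure Ω) [IsProbabilityMeasure μ]
    (Z : ℕ → Ω → ℝ) (hZmeas : ∀ i, Measurable (Z i))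
    (hZindep : iIndepFun Z μ)
    (hZgauss : ∀ i, Measure.map (Z i) μ = gaussianReal 0 1)
    (u : (N : ℕ) → Ω → (Fin N → ℝ))
    (hu : ∀ N ω (n : Fin N),
      u N ω n = Z n ω / Real.sqrt (∑ m : Fin N, (Z m ω) ^ 2)) :
    ∀ᵐ ω ∂μ, ∀ f : ℝ →ᵇ ℝ,
      Tendsto (fun N : ℕ =>
          ∫ t, f t ∂(empDist (fun n : Fin N => Real.sqrt N * u N ω n))) atTop
        (𝓝 (∫ t, f t ∂(gaussianReal 0 1))) :=
  stmt3_general μ Z hZmeas hZindep hZgauss u hu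
end

section
/- For each n ∈ ℕ, let X_{n,1}, …, X_{n,n} be i.i.d. real random variables on a common probability space, and let f : ℝ → ℝ be a bounded measurable function. Set α_n = E[f(X_{n,1})] and S_n = ∑_{m=1}^n (f(X_{n,m}) − α_n). Then S_n/n → 0 almost surely as n → ∞. -/
/-!
Fourth-moment method. The centred variables `Yₙₘ = f(Xₙₘ) - αₙ` are independent within a row,
have mean zero and are bounded by `D = 2 sup |f|`. For independent bounded `S` and `Y` with mean
zero, `E[(S + Y)⁴] = E[S⁴] + 6 E[S²] E[Y²] + E[Y⁴]`, so adding the variables of a row one at a time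
gives `E[(∑ₘ Yₙₘ)⁴] ≤ 3 n² D⁴`. Hence `∑ₙ E[(Sₙ / n)⁴] ≤ ∑ₙ 3 D⁴ / n² < ∞`, so `∑ₙ (Sₙ / n)⁴`
converges almost surely and `Sₙ / n → 0`. Only the law of each row enters, which is why no relation
between different rows is needed.
-/

open MeasureTheory ProbabilityTheory Filter Topology Finset
open scoped ENNReal

lemma abs_sum_le_card_mul {Ω ι : Type*} {Y : ι → Ω → ℝ} {D : ℝ} (hYb : ∀ i ω, |Y i ω| ≤ D)
    (s : Finset ι) (ω : Ω) :
    |∑ i ∈ s, Y i ω| ≤ #s * D :=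
  (abs_sum_le_sum_abs _ _).trans (by simpa using sum_le_card_nsmul s _ D fun i _ => hYb i ω)

lemma indepFun_sum_of_notMem {Ω ι : Type*} [MeasurableSpace Ω] {μ : Measure Ω} {Y : ι → Ω → ℝ}
    (hYm : ∀ i, Measurable (Y i)) (hind : iIndepFun Y μ)
    {s : Finset ι} {i : ι} (hi : i ∉ s) : IndepFun (fun ω => ∑ j ∈ s, Y j ω) (Y i) μ := by
  simpa only [Finset.sum_fn] using hind.indepFun_finsetSum_of_notMem hYm hi

section Moments

variable {Ω : Type*} [MeasurableSpace Ω] {μ : Measure Ω} [IsProbabilityMeasure μ]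

lemma abs_integral_le_of_abs_le {g : Ω → ℝ} {C : ℝ} (hg : ∀ ω, |g ω| ≤ C) :
    |∫ ω, g ω ∂μ| ≤ C := by
  simpa using norm_integral_le_of_norm_le_const (μ := μ) (f := g) (ae_of_all _ hg)

lemma integral_pow_le_of_abs_le {g : Ω → ℝ} {D : ℝ} (hg : ∀ ω, |g ω| ≤ D) (k : ℕ) :
    ∫ ω, g ω ^ k ∂μ ≤ D ^ k :=
  (le_abs_self _).trans (abs_integral_le_of_abs_le fun ω => by
    rw [abs_pow]; exact pow_le_pow_left₀ (abs_nonneg _) (hg ω) k)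

lemma integral_add_pow_of_indepFun {S Y : Ω → ℝ} (hSY : IndepFun S Y μ) (hS : Measurable S)
    (hY : Measurable Y) {A D : ℝ} (hSb : ∀ ω, |S ω| ≤ A) (hYb : ∀ ω, |Y ω| ≤ D) (n : ℕ) :
    ∫ ω, (S ω + Y ω) ^ n ∂μ =
      ∑ k ∈ range (n + 1), (∫ ω, S ω ^ k ∂μ) * (∫ ω, Y ω ^ (n - k) ∂μ) * n.choose k := by
  simp_rw [add_pow]
  rw [integral_finsetSum]
  · refine sum_congr rfl fun k _ => ?_
    have hpow : ∀ j : ℕ, Measurable fun x : ℝ => x ^ j := fun j => by fun_prop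
    rw [integral_mul_const]
    exact congrArg (· * _) ((hSY.comp (hpow k) (hpow (n - k))).integral_fun_mul_eq_mul_integral
      (by fun_prop) (by fun_prop))
  · intro k _
    refine Integrable.of_bound (by fun_prop) (A ^ k * D ^ (n - k) * n.choose k)
      (ae_of_all _ fun ω => ?_)
    rw [norm_mul, norm_mul, norm_pow, norm_pow, Real.norm_eq_abs, Real.norm_eq_abs,
      Real.norm_natCast]
    have hA : 0 ≤ A := (abs_nonneg _).trans (hSb ω)
    have hD : 0 ≤ D := (abs_nonneg _).trans (hYb ω)
    gcongr
    exacts [hSb ω, hYb ω]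

lemma integral_add_sq_of_indepFun {S Y : Ω → ℝ} (hSY : IndepFun S Y μ) (hS : Measurable S)
    (hY : Measurable Y) {A D : ℝ} (hSb : ∀ ω, |S ω| ≤ A) (hYb : ∀ ω, |Y ω| ≤ D)
    (hY0 : ∫ ω, Y ω ∂μ = 0) :
    ∫ ω, (S ω + Y ω) ^ 2 ∂μ = ∫ ω, S ω ^ 2 ∂μ + ∫ ω, Y ω ^ 2 ∂μ := by
  simp [integral_add_pow_of_indepFun hSY hS hY hSb hYb, sum_range_succ, hY0, add_comm]

lemma integral_add_pow_four_of_indepFun {S Y : Ω → ℝ} (hSY : IndepFun S Y μ) (hS : Measurable S)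
    (hY : Measurable Y) {A D : ℝ} (hSb : ∀ ω, |S ω| ≤ A) (hYb : ∀ ω, |Y ω| ≤ D)
    (hS0 : ∫ ω, S ω ∂μ = 0) (hY0 : ∫ ω, Y ω ∂μ = 0) :
    ∫ ω, (S ω + Y ω) ^ 4 ∂μ =
      ∫ ω, S ω ^ 4 ∂μ + 6 * (∫ ω, S ω ^ 2 ∂μ) * (∫ ω, Y ω ^ 2 ∂μ) + ∫ ω, Y ω ^ 4 ∂μ := by
  simp [integral_add_pow_of_indepFun hSY hS hY hSb hYb, sum_range_succ, hS0, hY0, Nat.choose]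
  ring

variable {ι : Type*} {Y : ι → Ω → ℝ} {D : ℝ}

lemma integral_sum_eq_zero (hYm : ∀ i, Measurable (Y i)) (hYb : ∀ i ω, |Y i ω| ≤ D)
    (hY0 : ∀ i, ∫ ω, Y i ω ∂μ = 0) (s : Finset ι) : ∫ ω, ∑ i ∈ s, Y i ω ∂μ = 0 := by
  rw [integral_finsetSum _ fun i _ => Integrable.of_bound (hYm i).aestronglyMeasurable D
    (ae_of_all _ (hYb i))]
  exact sum_eq_zero fun i _ => hY0 i

lemma integral_sum_sq_le [DecidableEq ι] (hYm : ∀ i, Measurable (Y i)) (hind : iIndepFun Y μ)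
    (hYb : ∀ i ω, |Y i ω| ≤ D) (hY0 : ∀ i, ∫ ω, Y i ω ∂μ = 0) (s : Finset ι) :
    ∫ ω, (∑ i ∈ s, Y i ω) ^ 2 ∂μ ≤ #s * D ^ 2 := by
  induction s using Finset.induction_on with
  | empty => simp
  | insert i s hi ih =>
    simp_rw [sum_insert hi, add_comm (Y i _)]
    rw [integral_add_sq_of_indepFun (indepFun_sum_of_notMem hYm hind hi) (by fun_prop) (hYm i)
      (abs_sum_le_card_mul hYb s) (hYb i) (hY0 i), card_insert_of_notMem hi]
    push_cast
    linarith [integral_pow_le_of_abs_le (μ := μ) (hYb i) 2]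

lemma integral_sum_pow_four_le [DecidableEq ι] (hYm : ∀ i, Measurable (Y i))
    (hind : iIndepFun Y μ) (hYb : ∀ i ω, |Y i ω| ≤ D) (hY0 : ∀ i, ∫ ω, Y i ω ∂μ = 0)
    (s : Finset ι) : ∫ ω, (∑ i ∈ s, Y i ω) ^ 4 ∂μ ≤ 3 * #s ^ 2 * D ^ 4 := by
  induction s using Finset.induction_on with
  | empty => simp
  | insert i s hi ih =>
    simp_rw [sum_insert hi, add_comm (Y i _)]
    rw [integral_add_pow_four_of_indepFun (indepFun_sum_of_notMem hYm hind hi) (by fun_prop)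
      (hYm i) (abs_sum_le_card_mul hYb s) (hYb i) (integral_sum_eq_zero hYm hYb hY0 s) (hY0 i),
      card_insert_of_notMem hi]
    have hS2 := integral_sum_sq_le hYm hind hYb hY0 s
    have hY2 := integral_pow_le_of_abs_le (μ := μ) (hYb i) 2
    have hY4 := integral_pow_le_of_abs_le (μ := μ) (hYb i) 4
    have hD : 0 ≤ D ^ 4 := by positivity
    calc _ ≤ 3 * #s ^ 2 * D ^ 4 + 6 * (#s * D ^ 2) * D ^ 2 + D ^ 4 := by
          gcongr
      _ ≤ 3 * ((#s + 1 : ℕ) : ℝ) ^ 2 * D ^ 4 := by push_cast; nlinarith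

end Moments

lemma tendsto_zero_of_tendsto_pow_zero {α : Type*} {l : Filter α} {u : α → ℝ} {k : ℕ}
    (hk : k ≠ 0) (h : Tendsto (fun a => u a ^ k) l (𝓝 0)) : Tendsto u l (𝓝 0) := by
  have hroot : ContinuousAt (fun x : ℝ => x ^ (k⁻¹ : ℝ)) 0 :=
    Real.continuousAt_rpow_const 0 _ (Or.inr (by positivity))
  have := hroot.tendsto.comp (by simpa using h.abs)
  simp only [Function.comp_def, Real.pow_rpow_inv_natCast (abs_nonneg _) hk,
    Real.zero_rpow (inv_ne_zero (Nat.cast_ne_zero.mpr hk))] at this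
  exact tendsto_zero_iff_abs_tendsto_zero u |>.mpr this

lemma ae_summable_of_summable_integral {Ω : Type*} [MeasurableSpace Ω] {μ : Measure Ω}
    {g : ℕ → Ω → ℝ} (hint : ∀ n, Integrable (g n) μ) (hnn : ∀ n ω, 0 ≤ g n ω)
    (hsum : Summable fun n => ∫ ω, g n ω ∂μ) : ∀ᵐ ω ∂μ, Summable fun n => g n ω := by
  have hnorm : ∀ n, eLpNorm (g n) 1 μ = ENNReal.ofReal (∫ ω, g n ω ∂μ) := fun n => by
    rw [eLpNorm_one_eq_lintegral_enorm, ofReal_integral_eq_lintegral_ofReal (hint n)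
      (ae_of_all _ (hnn n))]
    exact lintegral_congr fun ω => Real.enorm_of_nonneg (hnn n ω)
  have hfin : ∑' n, eLpNorm (g n) 1 μ ≠ ∞ := by
    simp_rw [hnorm, ← ENNReal.ofReal_tsum_of_nonneg (fun n => integral_nonneg (hnn n)) hsum]
    exact ENNReal.ofReal_ne_top
  filter_upwards [summable_norm_of_tsum_eLpNorm_ne_top le_rfl
    (fun n => (hint n).aestronglyMeasurable) hfin] with ω hω
  exact hω.of_norm

theorem ae_tendsto_sum_div_of_iIndepFun_of_abs_le {Ω : Type*} [MeasurableSpace Ω]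
    {μ : Measure Ω} [IsProbabilityMeasure μ] {Y : (n : ℕ) → Fin n → Ω → ℝ} {D : ℝ}
    (hYm : ∀ n m, Measurable (Y n m)) (hind : ∀ n, iIndepFun (Y n) μ)
    (hYb : ∀ n m ω, |Y n m ω| ≤ D) (hY0 : ∀ n m, ∫ ω, Y n m ω ∂μ = 0) :
    ∀ᵐ ω ∂μ, Tendsto (fun n : ℕ => (∑ m, Y n m ω) / n) atTop (𝓝 0) := by
  have hint : ∀ n : ℕ, Integrable (fun ω => ((∑ m, Y n m ω) / n) ^ 4) μ := fun n =>
    Integrable.of_bound (by fun_prop) ((n * D) ^ 4 / n ^ 4) (ae_of_all _ fun ω => by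
      rw [Real.norm_eq_abs, abs_pow, abs_div, Nat.abs_cast, div_pow]
      gcongr
      simpa using abs_sum_le_card_mul (hYb n) univ ω)
  have hmoment : ∀ n : ℕ, ∫ ω, ((∑ m, Y n m ω) / n) ^ 4 ∂μ ≤ 3 * D ^ 4 / n ^ 2 := fun n => by
    simp_rw [div_pow, integral_div]
    calc (∫ ω, (∑ m, Y n m ω) ^ 4 ∂μ) / n ^ 4 ≤ 3 * n ^ 2 * D ^ 4 / n ^ 4 := by
          gcongr
          simpa using integral_sum_pow_four_le (hYm n) (hind n) (hYb n) (hY0 n) univ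
      _ = 3 * D ^ 4 / n ^ 2 := by
          rcases eq_or_ne (n : ℝ) 0 with hn | hn
          · simp [hn]
          · field_simp
  have hsum : Summable fun n : ℕ => 3 * D ^ 4 / (n : ℝ) ^ 2 := by
    simpa [div_eq_mul_inv] using
      ((Real.summable_one_div_nat_pow (p := 2)).mpr one_lt_two).mul_left (3 * D ^ 4)
  filter_upwards [ae_summable_of_summable_integral hint (fun n ω => by positivity)
    (hsum.of_nonneg_of_le (fun n => integral_nonneg fun ω => by positivity) hmoment)] with ω hω
  exact tendsto_zero_of_tendsto_pow_zero four_ne_zero hω.tendsto_atTop_zero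

theorem stmt15_general {Ω : Type*} [MeasurableSpace Ω] (μ : Measure Ω) [IsProbabilityMeasure μ]
    (X : (n : ℕ) → Fin n → Ω → ℝ)
    (hmeas : ∀ n m, Measurable (X n m))
    -- within each row the variables are independent and identically distributed
    (hindep : ∀ n, iIndepFun (X n) μ)
    (f : ℝ → ℝ) (hf : Measurable f) (hfbdd : ∃ C : ℝ, ∀ t, |f t| ≤ C)
    -- `αₙ = E[f(X_{n,m})]` (independent of `m` since the row is identically distributed)
    (α : ℕ → ℝ) (hα : ∀ n : ℕ, ∀ m : Fin n, α n = ∫ ω, f (X n m ω) ∂μ)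
    (S : ℕ → Ω → ℝ) (hS : ∀ n ω, S n ω = ∑ m : Fin n, (f (X n m ω) - α n)) :
    ∀ᵐ ω ∂μ, Tendsto (fun n : ℕ => S n ω / n) atTop (𝓝 0) := by
  obtain ⟨C, hC⟩ := hfbdd
  have hαC : ∀ n (m : Fin n), |α n| ≤ C := fun n m => by
    rw [hα n m]; exact abs_integral_le_of_abs_le fun ω => hC _
  have hcentered : ∀ n (m : Fin n), ∫ ω, (f (X n m ω) - α n) ∂μ = 0 := fun n m => by
    have hfX : Integrable (fun ω => f (X n m ω)) μ :=
      .of_bound (hf.comp (hmeas n m)).aestronglyMeasurable C (ae_of_all _ fun ω => hC _)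
    simp [integral_sub hfX (integrable_const _), ← hα n m]
  have hlaw := ae_tendsto_sum_div_of_iIndepFun_of_abs_le (μ := μ)
    (Y := fun n m ω => f (X n m ω) - α n) (D := 2 * C) (fun n m => by fun_prop)
    (fun n => (hindep n).comp _ fun m => hf.sub measurable_const)
    (fun n m ω => (abs_sub _ _).trans (by linarith [hC (X n m ω), hαC n m])) hcentered
  simpa only [hS] using hlaw

/-- Let `X_{n,1}, …, X_{n,n}` be a triangular array which is i.i.d. within
each row, and let `f : ℝ → ℝ` be bounded and measurable.  With `αₙ = E[f(X_{n,1})]` and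
`Sₙ = ∑ₘ (f(X_{n,m}) − αₙ)`, we have `Sₙ/n → 0` almost surely as `n → ∞`. -/
theorem stmt15 {Ω : Type*} [MeasurableSpace Ω] (μ : Measure Ω) [IsProbabilityMeasure μ]
    (X : (n : ℕ) → Fin n → Ω → ℝ)
    (hmeas : ∀ n m, Measurable (X n m))
    -- within each row the variables are independent and identically distributed
    (hindep : ∀ n, iIndepFun (X n) μ)
    (hident : ∀ n, ∀ m m' : Fin n, Measure.map (X n m) μ = Measure.map (X n m') μ)
    (f : ℝ → ℝ) (hf : Measurable f) (hfbdd : ∃ C : ℝ, ∀ t, |f t| ≤ C)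
    -- `αₙ = E[f(X_{n,m})]` (independent of `m` since the row is identically distributed)
    (α : ℕ → ℝ) (hα : ∀ n : ℕ, ∀ m : Fin n, α n = ∫ ω, f (X n m ω) ∂μ)
    (S : ℕ → Ω → ℝ) (hS : ∀ n ω, S n ω = ∑ m : Fin n, (f (X n m ω) - α n)) :
    ∀ᵐ ω ∂μ, Tendsto (fun n : ℕ => S n ω / n) atTop (𝓝 0) :=
  stmt15_general μ X hmeas hindep f hf hfbdd α hα S hS
end
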